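/- Let S be a Cu-semigroup satisfying (O5), let (λ_j)_{j∈J} be a family of functionals on S, and let U be an ultrafilter on J. Define λ : S → [0,∞] by λ(x) = sup_{x' ≪ x} lim_{j→U} λ_j(x'), where lim_{j→U} denotes the limit along the ultrafilter U in the compact Hausdorff space [0,∞]. Then λ is a functional on S. -/

import Mathlib

open scoped ENNReal

section CuPreamble

variable {S : Type*} [AddCommMonoid S] [PartialOrder S]

/-- The way-below (compact containment) relation: `x ≪ y` if for every increasing
sequence with a supremum above `y`, some term dominates `x`. -/
def WayBelow (x y : S) : Prop :=
  ∀ (f : ℕ → S) (s : S), Monotone f → IsLUB (Set.range f) s → y ≤ s → ∃ n, x ≤ f n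

/-- A Cu-semigroup: a positively ordered commutative monoid satisfying (O1)-(O4). -/
structure IsCuSemigroup (S : Type*) [AddCommMonoid S] [PartialOrder S] : Prop where
  zero_le : ∀ x : S, 0 ≤ x
  add_le_add : ∀ ⦃a b c d : S⦄, a ≤ b → c ≤ d → a + c ≤ b + d
  O1 : ∀ f : ℕ → S, Monotone f → ∃ s : S, IsLUB (Set.range f) s
  O2 : ∀ x : S, ∃ f : ℕ → S, (∀ n, WayBelow (f n) (f (n + 1))) ∧ IsLUB (Set.range f) x
  O3 : ∀ ⦃x₁ x₂ y₁ y₂ : S⦄, WayBelow x₁ x₂ → WayBelow y₁ y₂ → WayBelow (x₁ + y₁) (x₂ + y₂)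
  O4 : ∀ (f g : ℕ → S) (s t : S), Monotone f → Monotone g → IsLUB (Set.range f) s →
    IsLUB (Set.range g) t → IsLUB (Set.range fun n => f n + g n) (s + t)

/-- The axiom (O5), including the strengthened form. -/
def SatisfiesO5 (S : Type*) [AddCommMonoid S] [PartialOrder S] : Prop :=
  (∀ x' x y : S, WayBelow x' x → x ≤ y → ∃ z : S, x' + z ≤ y ∧ y ≤ x + z) ∧
  (∀ x' x y w' w : S, WayBelow x' x → x + w ≤ y → WayBelow w' w →
    ∃ z : S, WayBelow w' z ∧ x' + z ≤ y ∧ y ≤ x + z)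

/-- The axiom (O6). -/
def SatisfiesO6 (S : Type*) [AddCommMonoid S] [PartialOrder S] : Prop :=
  ∀ x' x y z : S, WayBelow x' x → x ≤ y + z →
    ∃ y' z' : S, x' ≤ y' + z' ∧ y' ≤ y ∧ y' ≤ x ∧ z' ≤ z ∧ z' ≤ x

/-- A functional on a Cu-semigroup: a map to `[0,∞]` preserving order, addition, zero,
and suprema of increasing sequences. -/
structure IsFunctional (l : S → ℝ≥0∞) : Prop where
  mono : Monotone l
  map_zero : l 0 = 0
  map_add : ∀ x y : S, l (x + y) = l x + l y
  map_sup : ∀ (f : ℕ → S) (s : S), Monotone f → IsLUB (Set.range f) s → l s = ⨆ n, l (f n)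

/-- Edwards' condition. -/
def EdwardsCondition (S : Type*) [AddCommMonoid S] [PartialOrder S] : Prop :=
  ∀ l : S → ℝ≥0∞, IsFunctional l → ∀ x y : S,
    sInf {r : ℝ≥0∞ | ∃ l₁ l₂ : S → ℝ≥0∞, IsFunctional l₁ ∧ IsFunctional l₂ ∧
        (∀ s : S, l₁ s + l₂ s = l s) ∧ r = l₁ x + l₂ y} =
    sSup {r : ℝ≥0∞ | ∃ z : S, z ≤ x ∧ z ≤ y ∧ r = l z}

/-- A scale on a Cu-semigroup. -/
structure IsScale (Sg : Set S) : Prop where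
  hered : ∀ ⦃x y : S⦄, y ≤ x → x ∈ Sg → y ∈ Sg
  supClosed : ∀ (f : ℕ → S) (s : S), Monotone f → (∀ n, f n ∈ Sg) →
    IsLUB (Set.range f) s → s ∈ Sg
  generates : ∀ x' x : S, WayBelow x' x → ∃ L : List S, (∀ z ∈ L, z ∈ Sg) ∧ x' ≤ L.sum

/-- The `d`-fold amplification `Σ^{(d)}` of a scale. -/
def scaleAmp (Sg : Set S) : ℕ → Set S
  | 0 => {0}
  | d + 1 => {x : S | ∀ x' : S, WayBelow x' x →
      ∃ f : Fin (d + 1) → S, (∀ i, f i ∈ Sg) ∧ WayBelow x' (∑ i, f i)}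

end CuPreamble

/-! Pointwise limits along an ultrafilter of functionals are monotone and additive, by continuity
of addition on `[0,∞]`, but they need not preserve suprema of increasing sequences. In a
Cu-semigroup, the regularization `x ↦ sup_{x' ≪ x} μ x'` of any monotone additive `μ` repairs
this: additivity comes from (O2)-(O4), and preservation of suprema from the fact that an element
way below `sup_n f n` is already way below some `f n`. -/

open scoped Topology
open Filter

namespace Ultrafilter

variable {J X : Type*} [TopologicalSpace X] [CompactSpace X] (U : Ultrafilter J)

theorem tendsto_lim_map (g : J → X) : Tendsto g U (𝓝 (U.map g).lim) := by
  rw [Tendsto, ← coe_map]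
  exact (U.map g).le_nhds_lim

theorem lim_map_eq_of_tendsto [T2Space X] {g : J → X} {x : X} (h : Tendsto g U (𝓝 x)) :
    (U.map g).lim = x :=
  lim_eq_iff_le_nhds.2 (by rwa [coe_map])

theorem lim_map_const [T2Space X] (x : X) : (U.map fun _ => x).lim = x :=
  U.lim_map_eq_of_tendsto tendsto_const_nhds

theorem lim_map_mono [Preorder X] [OrderClosedTopology X] {g h : J → X} (hgh : ∀ j, g j ≤ h j) :
    (U.map g).lim ≤ (U.map h).lim :=
  le_of_tendsto_of_tendsto' (U.tendsto_lim_map g) (U.tendsto_lim_map h) hgh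

theorem lim_map_add [T2Space X] [Add X] [ContinuousAdd X] (g h : J → X) :
    (U.map fun j => g j + h j).lim = (U.map g).lim + (U.map h).lim :=
  U.lim_map_eq_of_tendsto ((U.tendsto_lim_map g).add (U.tendsto_lim_map h))

end Ultrafilter

section WayBelow

variable {S : Type*} [PartialOrder S] {x y z : S}

theorem WayBelow.le (h : WayBelow x y) : x ≤ y := by
  obtain ⟨_, hn⟩ := h (fun _ => y) y monotone_const
    (by rw [Set.range_const]; exact isLUB_singleton) le_rfl
  exact hn

theorem WayBelow.trans_le (h : WayBelow x y) (hyz : y ≤ z) : WayBelow x z :=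
  fun f s hf hs hz => h f s hf hs (hyz.trans hz)

theorem wayBelow_of_le_of_wayBelow (hxy : x ≤ y) (h : WayBelow y z) : WayBelow x z :=
  fun f s hf hs hz => (h f s hf hs hz).imp fun _ hn => hxy.trans hn

theorem monotone_of_wayBelow_succ {f : ℕ → S} (hf : ∀ n, WayBelow (f n) (f (n + 1))) :
    Monotone f :=
  monotone_nat_of_le_succ fun n => (hf n).le

end WayBelow

namespace IsCuSemigroup

variable {S : Type*} [AddCommMonoid S] [PartialOrder S]

theorem zero_wayBelow (hCu : IsCuSemigroup S) (x : S) : WayBelow (0 : S) x :=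
  fun _ _ _ _ _ => ⟨0, hCu.zero_le _⟩

theorem exists_wayBelow_of_wayBelow_of_isLUB (hCu : IsCuSemigroup S) {z s : S}
    (hz : WayBelow z s) {f : ℕ → S} (hf : Monotone f) (hs : IsLUB (Set.range f) s) : ∃ n, WayBelow z (f n) := by
  obtain ⟨g, hg, hgs⟩ := hCu.O2 s
  obtain ⟨k, hzk⟩ := hz g s (monotone_of_wayBelow_succ hg) hgs le_rfl
  obtain ⟨n, hkn⟩ := hg (k + 1) f s hf hs (hgs.1 ⟨k + 2, rfl⟩)
  exact ⟨n, (wayBelow_of_le_of_wayBelow hzk (hg k)).trans_le hkn⟩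

end IsCuSemigroup

section LowerRegularization

variable {S : Type*} [PartialOrder S]

noncomputable def lowerRegularization (μ : S → ℝ≥0∞) (x : S) : ℝ≥0∞ :=
  ⨆ (x' : S) (_ : WayBelow x' x), μ x'

variable {μ : S → ℝ≥0∞}

theorem le_lowerRegularization {x' x : S} (h : WayBelow x' x) :
    μ x' ≤ lowerRegularization μ x :=
  le_iSup₂_of_le x' h le_rfl

theorem lowerRegularization_mono : Monotone (lowerRegularization μ) :=
  fun _ _ hxy => iSup₂_le fun _ hz => le_lowerRegularization (hz.trans_le hxy)

variable [AddCommMonoid S]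

theorem lowerRegularization_zero (hCu : IsCuSemigroup S) : lowerRegularization μ 0 = μ 0 := by
  refine le_antisymm (iSup₂_le fun z hz => ?_) (le_lowerRegularization (hCu.zero_wayBelow 0))
  rw [le_antisymm hz.le (hCu.zero_le z)]

theorem lowerRegularization_add_le (hCu : IsCuSemigroup S) (hμ : Monotone μ)
    (hsub : ∀ x y, μ (x + y) ≤ μ x + μ y) (x y : S) :
    lowerRegularization μ (x + y) ≤ lowerRegularization μ x + lowerRegularization μ y := by
  obtain ⟨f, hf, hfx⟩ := hCu.O2 x
  obtain ⟨g, hg, hgy⟩ := hCu.O2 y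
  have hfmono := monotone_of_wayBelow_succ hf
  have hgmono := monotone_of_wayBelow_succ hg
  refine iSup₂_le fun z hz => ?_
  obtain ⟨n, hn⟩ := hz (fun n => f n + g n) (x + y)
    (fun _ _ hab => hCu.add_le_add (hfmono hab) (hgmono hab))
    (hCu.O4 f g x y hfmono hgmono hfx hgy) le_rfl
  calc μ z ≤ μ (f n + g n) := hμ hn
    _ ≤ μ (f n) + μ (g n) := hsub _ _
    _ ≤ lowerRegularization μ x + lowerRegularization μ y :=
      add_le_add (le_lowerRegularization ((hf n).trans_le (hfx.1 ⟨n + 1, rfl⟩)))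
        (le_lowerRegularization ((hg n).trans_le (hgy.1 ⟨n + 1, rfl⟩)))

theorem add_le_lowerRegularization_add (hCu : IsCuSemigroup S)
    (hsuper : ∀ x y, μ x + μ y ≤ μ (x + y)) (x y : S) :
    lowerRegularization μ x + lowerRegularization μ y ≤ lowerRegularization μ (x + y) :=
  ENNReal.biSup_add_biSup_le' ⟨0, hCu.zero_wayBelow x⟩ ⟨0, hCu.zero_wayBelow y⟩
    fun _ hx' _ hy' => (hsuper _ _).trans (le_lowerRegularization (hCu.O3 hx' hy'))

theorem lowerRegularization_eq_iSup_of_isLUB (hCu : IsCuSemigroup S) {f : ℕ → S} {s : S}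
    (hf : Monotone f) (hs : IsLUB (Set.range f) s) :
    lowerRegularization μ s = ⨆ n, lowerRegularization μ (f n) := by
  refine le_antisymm (iSup₂_le fun z hz => ?_)
    (iSup_le fun n => lowerRegularization_mono (hs.1 ⟨n, rfl⟩))
  obtain ⟨n, hn⟩ := hCu.exists_wayBelow_of_wayBelow_of_isLUB hz hf hs
  exact le_iSup_of_le n (le_lowerRegularization hn)

theorem isFunctional_lowerRegularization (hCu : IsCuSemigroup S) (hμ : Monotone μ)
    (hμ0 : μ 0 = 0) (hμadd : ∀ x y, μ (x + y) = μ x + μ y) :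
    IsFunctional (lowerRegularization μ) where
  mono := lowerRegularization_mono
  map_zero := (lowerRegularization_zero hCu).trans hμ0
  map_add x y := le_antisymm
    (lowerRegularization_add_le hCu hμ (fun a b => (hμadd a b).le) x y)
    (add_le_lowerRegularization_add hCu (fun a b => (hμadd a b).ge) x y)
  map_sup _ _ hf hs := lowerRegularization_eq_iSup_of_isLUB hCu hf hs

end LowerRegularization

theorem stmt_14_general {S : Type*} [AddCommMonoid S] [PartialOrder S] {J : Type*}
    (hCu : IsCuSemigroup S)
    (lam : J → S → ℝ≥0∞) (hlam : ∀ j, IsFunctional (lam j)) (U : Ultrafilter J) :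
    IsFunctional (fun x : S =>
      ⨆ (x' : S) (_ : WayBelow x' x), (U.map fun j => lam j x').lim) := by
  refine isFunctional_lowerRegularization hCu
    (fun x y hxy => U.lim_map_mono fun j => (hlam j).mono hxy) ?_ fun x y => ?_
  · simp only [(hlam _).map_zero]
    exact U.lim_map_const 0
  · simp only [(hlam _).map_add]
    exact U.lim_map_add _ _

/-- The limit of a family of functionals along an ultrafilter,
`λ(x) = sup_{x' ≪ x} lim_{j→U} λ_j(x')`, is again a functional. -/
theorem stmt_14 {S : Type*} [AddCommMonoid S] [PartialOrder S] {J : Type*}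
    (hCu : IsCuSemigroup S) (hO5 : SatisfiesO5 S)
    (lam : J → S → ℝ≥0∞) (hlam : ∀ j, IsFunctional (lam j)) (U : Ultrafilter J) :
    IsFunctional (fun x : S =>
      ⨆ (x' : S) (_ : WayBelow x' x), (U.map fun j => lam j x').lim) :=
  stmt_14_general hCu lam hlam U
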